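/- arXiv:1305.7297 — 2 statements merged into one kernel-verified Lean document; each statement's English description precedes it below -/
import Mathlib

section
/- Let U = {(x,y,y₁,y₂,z) ∈ ℝ⁵ : y₂ ≠ 0}, X₁ = ∂/∂y₂ and X₂ = ∂/∂x + y₁ ∂/∂y + y₂ ∂/∂y₁ + (y + y₂^{1/3}) ∂/∂z. Then at every point p ∈ U the five vectors X₁(p), X₂(p), [X₁,X₂](p), [X₁,[X₁,X₂]](p), [X₂,[X₁,X₂]](p) form a basis of ℝ⁵; that is, the Monge distribution of z' = y + (y'')^{1/3} is generic on U. -/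
/-- Lie bracket of vector fields on ℝ⁵, `[V,W](p) = DW(p)(V(p)) − DV(p)(W(p))`. -/
noncomputable def lieBracket (V W : (Fin 5 → ℝ) → (Fin 5 → ℝ)) :
    (Fin 5 → ℝ) → (Fin 5 → ℝ) :=
  fun p => fderiv ℝ W p (V p) - fderiv ℝ V p (W p)

/-- The real odd cube root: `cbrt t = sign(t) · |t|^(1/3)`. -/
noncomputable def cbrt (t : ℝ) : ℝ := Real.sign t * |t| ^ ((1 : ℝ) / 3)

/-- `X₁ = ∂/∂y₂`, coordinates `(x, y, y₁, y₂, z) = (p 0, p 1, p 2, p 3, p 4)`. -/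
noncomputable def X₁ : (Fin 5 → ℝ) → (Fin 5 → ℝ) := fun _ => ![0, 0, 0, 1, 0]

/-- `X₂ = ∂/∂x + y₁ ∂/∂y + y₂ ∂/∂y₁ + (y + y₂^{1/3}) ∂/∂z`. -/
noncomputable def X₂ : (Fin 5 → ℝ) → (Fin 5 → ℝ) :=
  fun p => ![1, p 2, p 3, 0, p 1 + cbrt (p 3)]

/-!
Replace the cube root by an arbitrary `f`. For `X₂ = ∂x + y₁ ∂y + y₂ ∂y₁ + (y + f(y₂)) ∂z` one
has `[X₁,X₂] = ∂y₁ + f'(y₂) ∂z`, `[X₁,[X₁,X₂]] = f''(y₂) ∂z` and `[X₂,[X₁,X₂]] = -∂y`, so the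
five fields are independent exactly where `f''(y₂) ≠ 0`. The cube root is `t ↦ t |t|^(-2/3)`,
whose second derivative `-(2/9) t |t|^(-8/3)` vanishes nowhere on `t ≠ 0`.
-/

open ContinuousLinearMap Filter Topology

theorem lieBracket_apply_of_hasFDerivAt {V W : (Fin 5 → ℝ) → (Fin 5 → ℝ)}
    {V' W' : (Fin 5 → ℝ) →L[ℝ] (Fin 5 → ℝ)} {p : Fin 5 → ℝ}
    (hV : HasFDerivAt V V' p) (hW : HasFDerivAt W W' p) :
    lieBracket V W p = W' (V p) - V' (W p) := by
  rw [lieBracket, hV.fderiv, hW.fderiv]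

theorem lieBracket_eq_of_eventuallyEq_right {V W W₀ : (Fin 5 → ℝ) → (Fin 5 → ℝ)}
    {p : Fin 5 → ℝ} (h : W =ᶠ[𝓝 p] W₀) : lieBracket V W p = lieBracket V W₀ p := by
  rw [lieBracket, lieBracket, h.fderiv_eq, h.eq_of_nhds]

theorem hasFDerivAt_X₁ (p : Fin 5 → ℝ) : HasFDerivAt X₁ (0 : (Fin 5 → ℝ) →L[ℝ] Fin 5 → ℝ) p :=
  hasFDerivAt_const _ p

noncomputable def mongeField (f : ℝ → ℝ) : (Fin 5 → ℝ) → (Fin 5 → ℝ) :=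
  fun p => ![1, p 2, p 3, 0, p 1 + f (p 3)]

noncomputable def mongeBracket (g : ℝ → ℝ) : (Fin 5 → ℝ) → (Fin 5 → ℝ) :=
  fun p => ![0, 0, 1, 0, g (p 3)]

theorem linearIndependent_mongeFrame {u v w a b : ℝ} (hb : b ≠ 0) :
    LinearIndependent ℝ ![![0, 0, 0, 1, 0], ![1, u, v, 0, w], ![0, 0, 1, 0, a],
      ![0, 0, 0, 0, b], ![0, -1, 0, 0, 0]] := by
  let M : Matrix (Fin 5) (Fin 5) ℝ := Matrix.of ![![0, 0, 0, 1, 0], ![1, u, v, 0, w],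
    ![0, 0, 1, 0, a], ![0, 0, 0, 0, b], ![0, -1, 0, 0, 0]]
  have hdet : M.det = b := by
    simp [M, Matrix.det_succ_row_zero, Fin.sum_univ_succ, Fin.succAbove, pow_succ]
  exact Matrix.linearIndependent_rows_iff_isUnit.2 <|
    (Matrix.isUnit_iff_isUnit_det M).2 <| hdet ▸ hb.isUnit

section

variable {f g : ℝ → ℝ} {a b : ℝ} {p : Fin 5 → ℝ}

theorem hasFDerivAt_mongeField (hf : HasDerivAt f a (p 3)) :
    HasFDerivAt (mongeField f)
      (pi ![0, proj 2, proj 3, 0, proj 1 + a • proj 3] : (Fin 5 → ℝ) →L[ℝ] Fin 5 → ℝ) p := by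
  refine hasFDerivAt_pi.2 fun i => ?_
  fin_cases i
  · exact hasFDerivAt_const _ p
  · exact hasFDerivAt_apply 2 p
  · exact hasFDerivAt_apply 3 p
  · exact hasFDerivAt_const _ p
  · exact (hasFDerivAt_apply 1 p).add (hf.comp_hasFDerivAt p (hasFDerivAt_apply 3 p))

theorem hasFDerivAt_mongeBracket (hg : HasDerivAt g b (p 3)) :
    HasFDerivAt (mongeBracket g)
      (pi ![0, 0, 0, 0, b • proj 3] : (Fin 5 → ℝ) →L[ℝ] Fin 5 → ℝ) p := by
  refine hasFDerivAt_pi.2 fun i => ?_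
  fin_cases i
  · exact hasFDerivAt_const _ p
  · exact hasFDerivAt_const _ p
  · exact hasFDerivAt_const _ p
  · exact hasFDerivAt_const _ p
  · exact hg.comp_hasFDerivAt p (hasFDerivAt_apply 3 p)

theorem lieBracket_X₁_mongeField (hf : HasDerivAt f (g (p 3)) (p 3)) :
    lieBracket X₁ (mongeField f) p = mongeBracket g p := by
  rw [lieBracket_apply_of_hasFDerivAt (hasFDerivAt_X₁ p) (hasFDerivAt_mongeField hf)]
  ext i
  fin_cases i <;> simp [X₁, mongeBracket]

theorem lieBracket_X₁_mongeField_eventuallyEq (hf : ∀ᶠ s in 𝓝 (p 3), HasDerivAt f (g s) s) :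
    lieBracket X₁ (mongeField f) =ᶠ[𝓝 p] mongeBracket g :=
  ((continuous_apply 3).continuousAt.eventually hf).mono fun _ => lieBracket_X₁_mongeField

theorem lieBracket_X₁_mongeBracket (hg : HasDerivAt g b (p 3)) :
    lieBracket X₁ (mongeBracket g) p = ![0, 0, 0, 0, b] := by
  rw [lieBracket_apply_of_hasFDerivAt (hasFDerivAt_X₁ p) (hasFDerivAt_mongeBracket hg)]
  ext i
  fin_cases i <;> simp [X₁]

theorem lieBracket_mongeField_mongeBracket (hf : HasDerivAt f (g (p 3)) (p 3))
    (hg : HasDerivAt g b (p 3)) :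
    lieBracket (mongeField f) (mongeBracket g) p = ![0, -1, 0, 0, 0] := by
  rw [lieBracket_apply_of_hasFDerivAt (hasFDerivAt_mongeField hf) (hasFDerivAt_mongeBracket hg)]
  ext i
  fin_cases i <;> simp [mongeField, mongeBracket]

theorem linearIndependent_mongeField_brackets (hf : ∀ᶠ s in 𝓝 (p 3), HasDerivAt f (g s) s)
    (hg : HasDerivAt g b (p 3)) (hb : b ≠ 0) :
    LinearIndependent ℝ
      ![X₁ p, mongeField f p, lieBracket X₁ (mongeField f) p,
        lieBracket X₁ (lieBracket X₁ (mongeField f)) p,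
        lieBracket (mongeField f) (lieBracket X₁ (mongeField f)) p] := by
  have hgerm := lieBracket_X₁_mongeField_eventuallyEq hf
  rw [lieBracket_eq_of_eventuallyEq_right hgerm, lieBracket_eq_of_eventuallyEq_right hgerm,
    hgerm.eq_of_nhds, lieBracket_X₁_mongeBracket hg,
    lieBracket_mongeField_mongeBracket hf.self_of_nhds hg]
  exact linearIndependent_mongeFrame hb

end

theorem hasDerivAt_abs_rpow_of_ne_zero {t : ℝ} (ht : t ≠ 0) (r : ℝ) :
    HasDerivAt (fun s : ℝ => |s| ^ r) (r * |t| ^ (r - 2) * t) t := by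
  have ht' : |t| ≠ 0 := abs_ne_zero.2 ht
  refine ((Real.hasDerivAt_rpow_const (Or.inl ht')).comp t (hasDerivAt_abs ht)).congr_deriv ?_
  rw [show r - 1 = r - 2 + 1 by ring, Real.rpow_add_one ht', mul_assoc, mul_assoc, abs_mul_sign,
    mul_assoc]

theorem hasDerivAt_mul_abs_rpow {t : ℝ} (ht : t ≠ 0) (r : ℝ) :
    HasDerivAt (fun s : ℝ => s * |s| ^ r) ((r + 1) * |t| ^ r) t := by
  refine ((hasDerivAt_id t).mul (hasDerivAt_abs_rpow_of_ne_zero ht r)).congr_deriv ?_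
  have ht' : |t| ≠ 0 := abs_ne_zero.2 ht
  have hr : |t| ^ r = |t| ^ (r - 2) * (|t| * |t|) := by
    rw [← mul_assoc, ← Real.rpow_add_one ht', ← Real.rpow_add_one ht']
    ring_nf
  rw [hr, abs_mul_abs_self, id]
  ring

theorem Real.sign_mul_abs (t : ℝ) : Real.sign t * |t| = t := by
  rcases lt_trichotomy t 0 with h | rfl | h
  · rw [Real.sign_of_neg h, abs_of_neg h]; ring
  · simp
  · rw [Real.sign_of_pos h, abs_of_pos h]; ring

theorem cbrt_eq_mul_abs_rpow (t : ℝ) : cbrt t = t * |t| ^ (-(2 : ℝ) / 3) := by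
  rcases eq_or_ne t 0 with rfl | ht
  · simp [cbrt]
  · rw [cbrt, show (1 : ℝ) / 3 = -2 / 3 + 1 by norm_num, Real.rpow_add_one (abs_ne_zero.2 ht),
      mul_comm _ |t|, ← mul_assoc, Real.sign_mul_abs]

theorem hasDerivAt_cbrt {t : ℝ} (ht : t ≠ 0) :
    HasDerivAt cbrt (1 / 3 * |t| ^ (-(2 : ℝ) / 3)) t := by
  rw [show cbrt = fun s => s * |s| ^ (-(2 : ℝ) / 3) from funext cbrt_eq_mul_abs_rpow]
  convert hasDerivAt_mul_abs_rpow ht (-(2 : ℝ) / 3) using 2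
  norm_num

/-- The Monge distribution of `z' = y + (y'')^{1/3}` is generic on `U = {y₂ ≠ 0}`. -/
theorem monge_newex_generic :
    ∀ p : Fin 5 → ℝ, p 3 ≠ 0 →
      LinearIndependent ℝ
        ![X₁ p, X₂ p, lieBracket X₁ X₂ p,
          lieBracket X₁ (lieBracket X₁ X₂) p,
          lieBracket X₂ (lieBracket X₁ X₂) p] := by
  intro p hp
  rw [show X₂ = mongeField cbrt from rfl]
  have hcbrt : ∀ᶠ s in 𝓝 (p 3), HasDerivAt cbrt (1 / 3 * |s| ^ (-(2 : ℝ) / 3)) s :=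
    (eventually_ne_nhds hp).mono fun _ => hasDerivAt_cbrt
  have hcbrt' := (hasDerivAt_abs_rpow_of_ne_zero hp (-(2 : ℝ) / 3)).const_mul (1 / 3)
  have hb : 1 / 3 * (-(2 : ℝ) / 3 * |p 3| ^ (-(2 : ℝ) / 3 - 2) * p 3) ≠ 0 := by
    positivity
  exact linearIndependent_mongeField_brackets hcbrt hcbrt' hb
end

section
/- Let U = {(x,y,y₁,y₂,z) ∈ ℝ⁵ : y₂ ≠ 0}, X₁ = ∂/∂y₂, X₂ = ∂/∂x + y₁ ∂/∂y + y₂ ∂/∂y₁ + (y + y₂^{1/3}) ∂/∂z, and define the vector fields S₁ = x ∂/∂y + ∂/∂y₁ + (1/2)x² ∂/∂z, S₄ = ∂/∂x, S₅ = ∂/∂y + x ∂/∂z, S₆ = ∂/∂z. Then on U each of S₁, S₄, S₅, S₆ commutes with both X₁ and X₂: [Sᵢ, X₁] = 0 and [Sᵢ, X₂] = 0 for i ∈ {1,4,5,6}. In particular, S₁, S₄, S₅, S₆ are infinitesimal symmetries of the Monge distribution of z' = y + (y'')^{1/3}. -/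
/-- `S₁ = x ∂/∂y + ∂/∂y₁ + (1/2)x² ∂/∂z`. -/
noncomputable def S₁ : (Fin 5 → ℝ) → (Fin 5 → ℝ) :=
  fun p => ![0, p 0, 1, 0, (1 / 2) * (p 0) ^ 2]

/-- `S₄ = ∂/∂x`. -/
noncomputable def S₄ : (Fin 5 → ℝ) → (Fin 5 → ℝ) := fun _ => ![1, 0, 0, 0, 0]

/-- `S₅ = ∂/∂y + x ∂/∂z`. -/
noncomputable def S₅ : (Fin 5 → ℝ) → (Fin 5 → ℝ) := fun p => ![0, 1, 0, 0, p 0]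

/-- `S₆ = ∂/∂z`. -/
noncomputable def S₆ : (Fin 5 → ℝ) → (Fin 5 → ℝ) := fun _ => ![0, 0, 0, 0, 1]

theorem differentiableAt_cbrt {t : ℝ} (ht : t ≠ 0) : DifferentiableAt ℝ cbrt t := by
  rcases ht.lt_or_gt with hneg | hpos
  · have h : DifferentiableAt ℝ (fun s : ℝ => -(-s) ^ ((1 : ℝ) / 3)) t :=
      (differentiableAt_id.neg.rpow_const (Or.inl (neg_ne_zero.mpr ht))).neg
    refine h.congr_of_eventuallyEq ?_
    filter_upwards [Iio_mem_nhds hneg] with s (hs : s < 0)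
    simp [cbrt, Real.sign_of_neg hs, abs_of_neg hs]
  · have h : DifferentiableAt ℝ (fun s : ℝ => s ^ ((1 : ℝ) / 3)) t :=
      differentiableAt_id.rpow_const (Or.inl ht)
    refine h.congr_of_eventuallyEq ?_
    filter_upwards [Ioi_mem_nhds hpos] with s (hs : 0 < s)
    simp [cbrt, Real.sign_of_pos hs, abs_of_pos hs]

theorem HasFDerivAt.vecCons₅ {𝕜 E : Type*} [NontriviallyNormedField 𝕜] [NormedAddCommGroup E]
    [NormedSpace 𝕜 E] {f₀ f₁ f₂ f₃ f₄ : E → 𝕜} {f₀' f₁' f₂' f₃' f₄' : E →L[𝕜] 𝕜} {p : E}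
    (h₀ : HasFDerivAt f₀ f₀' p) (h₁ : HasFDerivAt f₁ f₁' p) (h₂ : HasFDerivAt f₂ f₂' p)
    (h₃ : HasFDerivAt f₃ f₃' p) (h₄ : HasFDerivAt f₄ f₄' p) :
    HasFDerivAt (fun q => ![f₀ q, f₁ q, f₂ q, f₃ q, f₄ q])
      (ContinuousLinearMap.pi ![f₀', f₁', f₂', f₃', f₄']) p := by
  refine hasFDerivAt_pi'' fun i => ?_
  fin_cases i <;> assumption

theorem fderiv_X₁ (p : Fin 5 → ℝ) : fderiv ℝ X₁ p = 0 := fderiv_const_apply _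

theorem fderiv_S₄ (p : Fin 5 → ℝ) : fderiv ℝ S₄ p = 0 := fderiv_const_apply _

theorem fderiv_S₆ (p : Fin 5 → ℝ) : fderiv ℝ S₆ p = 0 := fderiv_const_apply _

theorem fderiv_X₂_apply {p : Fin 5 → ℝ} (hp : p 3 ≠ 0) (v : Fin 5 → ℝ) :
    fderiv ℝ X₂ p v = ![0, v 2, v 3, 0, v 1 + deriv cbrt (p 3) * v 3] := by
  have hcbrt := (differentiableAt_cbrt hp).hasDerivAt
  have hX₂ : HasFDerivAt X₂ _ p :=
    .vecCons₅ (hasFDerivAt_const _ _) (hasFDerivAt_apply 2 p) (hasFDerivAt_apply 3 p)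
      (hasFDerivAt_const _ _)
      ((hasFDerivAt_apply 1 p).add
        (hcbrt.comp_hasFDerivAt (f := fun q : Fin 5 → ℝ => q 3) p (hasFDerivAt_apply 3 p)))
  rw [hX₂.fderiv]
  ext i; fin_cases i <;> simp [mul_comm]

theorem fderiv_S₁_apply (p v : Fin 5 → ℝ) :
    fderiv ℝ S₁ p v = ![0, v 0, 0, 0, p 0 * v 0] := by
  have hsq : HasDerivAt (fun s : ℝ => 1 / 2 * s ^ 2) (p 0) (p 0) := by
    simpa using ((hasDerivAt_pow 2 (p 0)).const_mul (1 / 2 : ℝ))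
  have hS₁ : HasFDerivAt S₁ _ p :=
    .vecCons₅ (hasFDerivAt_const _ _) (hasFDerivAt_apply 0 p) (hasFDerivAt_const _ _)
      (hasFDerivAt_const _ _)
      (hsq.comp_hasFDerivAt (f := fun q : Fin 5 → ℝ => q 0) p (hasFDerivAt_apply 0 p))
  rw [hS₁.fderiv]
  ext i; fin_cases i <;> simp

theorem fderiv_S₅_apply (p v : Fin 5 → ℝ) : fderiv ℝ S₅ p v = ![0, 0, 0, 0, v 0] := by
  have hS₅ : HasFDerivAt S₅ _ p :=
    .vecCons₅ (hasFDerivAt_const _ _) (hasFDerivAt_const _ _) (hasFDerivAt_const _ _)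
      (hasFDerivAt_const _ _) (hasFDerivAt_apply 0 p)
  rw [hS₅.fderiv]
  ext i; fin_cases i <;> simp

/-- `S₁, S₄, S₅, S₆` commute with `X₁` and `X₂` on `U = {y₂ ≠ 0}`; in particular they
are infinitesimal symmetries of the Monge distribution of `z' = y + (y'')^{1/3}`. -/
theorem symmetries_S₁_S₄_S₅_S₆ :
    ∀ p : Fin 5 → ℝ, p 3 ≠ 0 →
      lieBracket S₁ X₁ p = 0 ∧ lieBracket S₁ X₂ p = 0 ∧
      lieBracket S₄ X₁ p = 0 ∧ lieBracket S₄ X₂ p = 0 ∧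
      lieBracket S₅ X₁ p = 0 ∧ lieBracket S₅ X₂ p = 0 ∧
      lieBracket S₆ X₁ p = 0 ∧ lieBracket S₆ X₂ p = 0 := by
  intro p hp
  simp only [lieBracket, fderiv_X₁, fderiv_S₄, fderiv_S₆, fderiv_X₂_apply hp, fderiv_S₁_apply,
    fderiv_S₅_apply]
  refine ⟨?_, ?_, ?_, ?_, ?_, ?_, ?_, ?_⟩ <;> ext i <;> fin_cases i <;>
    simp [X₁, X₂, S₁, S₄, S₅, S₆]
end
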